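/- Let H : V → B(H) be defined by H(ω) = A(ω) − s₀ Γ(ω) D(ω) where A(ω) is invertible with A(ω)⁻¹ having a simple pole structure such that D(ω) A(ω)⁻¹ Γ(ω) = t(ω)/(ω − ω₀) + r(ω) with t, r holomorphic at ω₀, t(ω₀) ≠ 0, and s₀ a constant with 1/s₀ ≠ r(ω₀). Then ω near ω₀ is a characteristic value of H if and only if (ω − ω₀)(1 − s₀ r(ω)) − s₀ t(ω) = 0, and to leading order the characteristic value satisfies ω − ω₀ = t(ω₀)/(1/s₀ − r(ω₀)) + higher order corrections. -/

import Mathlib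

open ContinuousLinearMap

/-!
Solving `A φ = s (D φ) Γ` gives `φ = s (D φ) A⁻¹ Γ`, so a nonzero solution exists exactly
when `s D(A⁻¹ Γ) = 1`. Substituting the pole expansion of `D A⁻¹ Γ` and clearing the
denominator `ω − ω₀` turns this into the scalar equation; near `ω₀` the factor `1/s₀ − r(ω)`
stays away from zero by continuity of `r`, which lets one solve for `ω − ω₀`.
-/

theorem exists_ne_zero_sub_smul_eq_zero_iff {K E : Type*} [Field K] [AddCommGroup E]
    [Module K E] {A Ainv : E →ₗ[K] E} (hA : ∀ x, A (Ainv x) = x) (hAinv : ∀ x, Ainv (A x) = x)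
    {Γ : E} (hΓ : Γ ≠ 0) (D : E →ₗ[K] K) (s : K) :
    (∃ φ, φ ≠ 0 ∧ A φ - (s * D φ) • Γ = 0) ↔ s * D (Ainv Γ) = 1 := by
  constructor
  · rintro ⟨φ, hφ, hker⟩
    have hφ_eq : φ = (s * D φ) • Ainv Γ := by
      rw [← map_smul, ← sub_eq_zero.mp hker, hAinv]
    have hDφ : D φ ≠ 0 := by
      intro h
      rw [h, mul_zero, zero_smul] at hφ_eq
      exact hφ hφ_eq
    have hDφ_eq : D φ * 1 = D φ * (s * D (Ainv Γ)) := by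
      conv_lhs => rw [mul_one, hφ_eq]
      rw [map_smul, smul_eq_mul]
      ring
    exact (mul_left_cancel₀ hDφ hDφ_eq).symm
  · intro h
    refine ⟨Ainv Γ, fun h0 => hΓ ?_, ?_⟩
    · rw [← hA Γ, h0, map_zero]
    · rw [hA, h, one_smul, sub_self]

theorem mul_div_add_eq_one_iff {K : Type*} [Field K] {c : K} (hc : c ≠ 0) (s t r : K) :
    s * (t / c + r) = 1 ↔ c * (1 - s * r) - s * t = 0 := by
  rw [div_add' _ _ _ hc, ← mul_div_assoc, div_eq_one_iff_eq hc, ← sub_eq_zero]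
  constructor <;> intro h <;> linear_combination -h

theorem eq_div_of_mul_one_sub_mul_sub_eq_zero {K : Type*} [Field K] {c s t r : K} (hc : c ≠ 0)
    (hr : 1 / s - r ≠ 0) (h : c * (1 - s * r) - s * t = 0) : c = t / (1 / s - r) := by
  have hs : s ≠ 0 := by
    rintro rfl
    exact hc (by simpa using h)
  rw [eq_div_iff hr]
  apply mul_left_cancel₀ hs
  field_simp
  linear_combination h

theorem stmt15_general {H : Type*} [NormedAddCommGroup H] [InnerProductSpace ℂ H]
    (V : Set ℂ) (ω₀ : ℂ)
    (A Ainv : ℂ → H →L[ℂ] H) (Γ : ℂ → H) (D : ℂ → H →L[ℂ] ℂ) (s₀ : ℂ) (t r : ℂ → ℂ)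
    (hinv : ∀ ω ∈ V, A ω ∘L Ainv ω = ContinuousLinearMap.id ℂ H ∧
      Ainv ω ∘L A ω = ContinuousLinearMap.id ℂ H)
    (hΓ : ∀ ω ∈ V, Γ ω ≠ 0)
    (hDAΓ : ∀ ω ∈ V, ω ≠ ω₀ → D ω (Ainv ω (Γ ω)) = t ω / (ω - ω₀) + r ω)
    (hr : AnalyticAt ℂ r ω₀) (hsr : 1 / s₀ ≠ r ω₀) :
    ∃ δ > 0, ∀ ω ∈ V, ω ≠ ω₀ → ‖ω - ω₀‖ < δ →
      (((∃ φ : H, φ ≠ 0 ∧ A ω φ - (s₀ * D ω φ) • Γ ω = 0) ↔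
          (ω - ω₀) * (1 - s₀ * r ω) - s₀ * t ω = 0) ∧
        ((∃ φ : H, φ ≠ 0 ∧ A ω φ - (s₀ * D ω φ) • Γ ω = 0) →
          ω - ω₀ = t ω / (1 / s₀ - r ω))) := by
  obtain ⟨δ, hδ, hr_ne⟩ := Metric.eventually_nhds_iff.mp (hr.continuousAt.eventually_ne hsr.symm)
  refine ⟨δ, hδ, fun ω hωV hωne hωδ => ?_⟩
  have hc : ω - ω₀ ≠ 0 := sub_ne_zero.mpr hωne
  have hchar : (∃ φ : H, φ ≠ 0 ∧ A ω φ - (s₀ * D ω φ) • Γ ω = 0) ↔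
      (ω - ω₀) * (1 - s₀ * r ω) - s₀ * t ω = 0 := by
    obtain ⟨hAAinv, hAinvA⟩ := hinv ω hωV
    rw [← mul_div_add_eq_one_iff hc, ← hDAΓ ω hωV hωne]
    exact exists_ne_zero_sub_smul_eq_zero_iff (A := (A ω : H →ₗ[ℂ] H)) (Ainv := Ainv ω)
      (fun x => congr($hAAinv x)) (fun x => congr($hAinvA x)) (hΓ ω hωV) (D ω : H →ₗ[ℂ] ℂ) s₀
  have hden : 1 / s₀ - r ω ≠ 0 :=
    sub_ne_zero.mpr (hr_ne (by rwa [dist_eq_norm])).symm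
  exact ⟨hchar, fun h => eq_div_of_mul_one_sub_mul_sub_eq_zero hc hden (hchar.mp h)⟩

/-- Characteristic values of the rank-one perturbation `H(ω) = A(ω) − s₀ Γ(ω) D(ω)`:
with `D(ω) A(ω)⁻¹ Γ(ω) = t(ω)/(ω−ω₀) + r(ω)`, `t, r` holomorphic at `ω₀`, `t(ω₀) ≠ 0`,
`1/s₀ ≠ r(ω₀)`, then for `ω` near `ω₀`, `ω` is a characteristic value of `H` iff
`(ω−ω₀)(1 − s₀ r(ω)) − s₀ t(ω) = 0`, in which case `ω − ω₀ = t(ω)/(1/s₀ − r(ω))`. -/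
theorem stmt15 {H : Type*} [NormedAddCommGroup H] [InnerProductSpace ℂ H] [CompleteSpace H]
    (V : Set ℂ) (hV : IsOpen V) (ω₀ : ℂ) (hω₀ : ω₀ ∈ V)
    (A Ainv : ℂ → H →L[ℂ] H) (Γ : ℂ → H) (D : ℂ → H →L[ℂ] ℂ) (s₀ : ℂ) (t r : ℂ → ℂ)
    (hinv : ∀ ω ∈ V, A ω ∘L Ainv ω = ContinuousLinearMap.id ℂ H ∧
      Ainv ω ∘L A ω = ContinuousLinearMap.id ℂ H)
    (hΓ : ∀ ω ∈ V, Γ ω ≠ 0)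
    (hDAΓ : ∀ ω ∈ V, ω ≠ ω₀ → D ω (Ainv ω (Γ ω)) = t ω / (ω - ω₀) + r ω)
    (ht : AnalyticAt ℂ t ω₀) (hr : AnalyticAt ℂ r ω₀)
    (ht0 : t ω₀ ≠ 0) (hs0 : s₀ ≠ 0) (hsr : 1 / s₀ ≠ r ω₀) :
    ∃ δ > 0, ∀ ω ∈ V, ω ≠ ω₀ → ‖ω - ω₀‖ < δ →
      (((∃ φ : H, φ ≠ 0 ∧ A ω φ - (s₀ * D ω φ) • Γ ω = 0) ↔
          (ω - ω₀) * (1 - s₀ * r ω) - s₀ * t ω = 0) ∧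
        ((∃ φ : H, φ ≠ 0 ∧ A ω φ - (s₀ * D ω φ) • Γ ω = 0) →
          ω - ω₀ = t ω / (1 / s₀ - r ω))) :=
  stmt15_general V ω₀ A Ainv Γ D s₀ t r hinv hΓ hDAΓ hr hsr
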